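/- Let A be an m×m real matrix, Ã a symmetric m×m real matrix, Â := Ã + εI for some ε ≥ 0, and B, B̃ be m×n real matrices. Let δ, γ, β, R, α₁, α₂ be nonnegative reals with α₁ > 0 and α₂ > 0. Assume ‖Ã − A‖_op ≤ γδ, ‖B̃ − B‖_F ≤ βδ, ‖B‖_F ≤ R, ‖Ãv‖ ≥ α₁‖v‖ and vᵀÃv ≥ 0 for all v ∈ ℝ^m, and ‖Av‖ ≥ α₂‖v‖ for all v ∈ ℝ^m. Then Â and A are invertible and ‖Â⁻¹B̃ − A⁻¹B‖_F ≤ βδ/(α₁ + ε) + R(γδ + ε)/((α₁ + ε)α₂). -/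

import Mathlib

open Matrix

/-- Euclidean (ℓ²) norm of a vector. -/
noncomputable def euclNorm {ι : Type*} [Fintype ι] (v : ι → ℝ) : ℝ :=
  Real.sqrt (∑ i, v i ^ 2)

/-- Frobenius norm of a real matrix. -/
noncomputable def frobNorm {ι κ : Type*} [Fintype ι] [Fintype κ] (M : Matrix ι κ ℝ) : ℝ :=
  Real.sqrt (∑ i, ∑ j, M i j ^ 2)

/-- ℓ²→ℓ² operator norm of a real matrix. -/
noncomputable def l2OpNorm {ι κ : Type*} [Fintype ι] [Fintype κ] [DecidableEq κ]
    (M : Matrix ι κ ℝ) : ℝ :=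
  ‖(Matrix.toEuclideanLin M).toContinuousLinearMap‖

/-!
Write `Â = A' + ε I`. The eigenvalues of the symmetric matrix `A'` have absolute value at least
`α₁` by the lower bound on `‖A' v‖` and are nonnegative by semidefiniteness, so
`vᵀ Â v ≥ (α₁ + ε) ‖v‖²`, and Cauchy–Schwarz gives `‖Â v‖ ≥ (α₁ + ε) ‖v‖`. Hence `Â` is
invertible with `‖Â⁻¹‖_op ≤ (α₁ + ε)⁻¹`, and likewise `‖A⁻¹‖_op ≤ α₂⁻¹`. The identity
`Â⁻¹ B' - A⁻¹ B = Â⁻¹ ((B' - B) - (Â - A) A⁻¹ B)`, the bound `‖Â - A‖_op ≤ γ δ + ε` and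
`‖M N‖_F ≤ ‖M‖_op ‖N‖_F` (applied column by column) then give the estimate.
-/

open scoped RealInnerProductSpace

namespace LinearMap.IsSymmetric

variable {E : Type*} [NormedAddCommGroup E] [InnerProductSpace ℝ E] [FiniteDimensional ℝ E]
  {T : E →ₗ[ℝ] E} {n : ℕ}

theorem inner_apply_self_eq_sum_eigenvalues (hT : T.IsSymmetric) (hn : Module.finrank ℝ E = n)
    (x : E) :
    ⟪x, T x⟫ = ∑ i, hT.eigenvalues hn i * ⟪hT.eigenvectorBasis hn i, x⟫ ^ 2 := by
  rw [← (hT.eigenvectorBasis hn).sum_inner_mul_inner x (T x)]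
  refine Finset.sum_congr rfl fun i _ => ?_
  rw [← hT, hT.apply_eigenvectorBasis, RCLike.ofReal_real_eq_id, id_eq, real_inner_smul_left,
    real_inner_comm (hT.eigenvectorBasis hn i) x]
  ring

theorem le_eigenvalues {α : ℝ} (hT : T.IsSymmetric) (hn : Module.finrank ℝ E = n)
    (hlb : ∀ x, α * ‖x‖ ≤ ‖T x‖) (hpos : ∀ x, 0 ≤ ⟪x, T x⟫) (i : Fin n) :
    α ≤ hT.eigenvalues hn i := by
  have hnonneg : 0 ≤ hT.eigenvalues hn i :=
    eigenvalue_nonneg_of_nonneg (hT.hasEigenvalue_eigenvalues hn i) (by simpa only [RCLike.re_to_real] using hpos)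
  simpa [hT.apply_eigenvectorBasis, norm_smul, abs_of_nonneg hnonneg,
    (hT.eigenvectorBasis hn).orthonormal.1 i] using hlb (hT.eigenvectorBasis hn i)

theorem mul_norm_sq_le_inner_apply_self {α : ℝ} (hT : T.IsSymmetric)
    (hlb : ∀ x, α * ‖x‖ ≤ ‖T x‖) (hpos : ∀ x, 0 ≤ ⟪x, T x⟫) (x : E) :
    α * ‖x‖ ^ 2 ≤ ⟪x, T x⟫ := by
  rw [hT.inner_apply_self_eq_sum_eigenvalues rfl, ← (hT.eigenvectorBasis rfl).sum_sq_inner_right,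
    Finset.mul_sum]
  exact Finset.sum_le_sum fun i _ =>
    mul_le_mul_of_nonneg_right (hT.le_eigenvalues rfl hlb hpos i) (sq_nonneg _)

end LinearMap.IsSymmetric

theorem mul_norm_le_norm_of_mul_norm_sq_le_inner {E : Type*} [NormedAddCommGroup E]
    [InnerProductSpace ℝ E] {a : ℝ} {x y : E} (h : a * ‖x‖ ^ 2 ≤ ⟪x, y⟫) : a * ‖x‖ ≤ ‖y‖ := by
  rcases (norm_nonneg x).eq_or_lt with hx | hx
  · rw [← hx, mul_zero]; exact norm_nonneg y
  · have := h.trans (real_inner_le_norm x y)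
    nlinarith

section EuclNorm

variable {ι κ : Type*} [Fintype ι] [Fintype κ]

theorem euclNorm_eq_norm (v : ι → ℝ) : euclNorm v = ‖WithLp.toLp 2 v‖ := by
  simp [euclNorm, EuclideanSpace.norm_eq]

theorem dotProduct_eq_inner (v w : ι → ℝ) : v ⬝ᵥ w = ⟪WithLp.toLp 2 v, WithLp.toLp 2 w⟫ := by
  rw [EuclideanSpace.inner_toLp_toLp, star_trivial, dotProduct_comm]

theorem dotProduct_self_eq_euclNorm_sq (v : ι → ℝ) : v ⬝ᵥ v = euclNorm v ^ 2 := by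
  rw [dotProduct_eq_inner, real_inner_self_eq_norm_sq, euclNorm_eq_norm]

variable [DecidableEq κ]

theorem euclNorm_mulVec_le (M : Matrix ι κ ℝ) (v : κ → ℝ) :
    euclNorm (M *ᵥ v) ≤ l2OpNorm M * euclNorm v := by
  rw [euclNorm_eq_norm, euclNorm_eq_norm]
  exact (toEuclideanLin M).toContinuousLinearMap.le_opNorm (WithLp.toLp 2 v)

theorem l2OpNorm_le {M : Matrix ι κ ℝ} {c : ℝ} (hc : 0 ≤ c)
    (h : ∀ v, euclNorm (M *ᵥ v) ≤ c * euclNorm v) : l2OpNorm M ≤ c :=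
  (toEuclideanLin M).toContinuousLinearMap.opNorm_le_bound hc fun x => by
    simpa [euclNorm_eq_norm, toLpLin_apply] using h x.ofLp

theorem l2OpNorm_nonneg (M : Matrix ι κ ℝ) : 0 ≤ l2OpNorm M := norm_nonneg _

theorem l2OpNorm_add_le (M N : Matrix ι κ ℝ) : l2OpNorm (M + N) ≤ l2OpNorm M + l2OpNorm N := by
  simp only [l2OpNorm, map_add]
  exact norm_add_le _ _

theorem l2OpNorm_smul_one_le {c : ℝ} (hc : 0 ≤ c) : l2OpNorm (c • 1 : Matrix κ κ ℝ) ≤ c :=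
  l2OpNorm_le hc fun v => by
    rw [smul_mulVec, one_mulVec, euclNorm_eq_norm, euclNorm_eq_norm, WithLp.toLp_smul, norm_smul,
      Real.norm_of_nonneg hc]

end EuclNorm

section LowerBound

variable {ι : Type*} [Fintype ι] [DecidableEq ι] {M : Matrix ι ι ℝ} {a : ℝ}

theorem isUnit_of_mul_euclNorm_le (ha : 0 < a) (h : ∀ v, a * euclNorm v ≤ euclNorm (M *ᵥ v)) :
    IsUnit M := by
  rw [← mulVec_injective_iff_isUnit]
  intro x y hxy
  have hle := h (x - y)
  rw [mulVec_sub, hxy, sub_self, euclNorm_eq_norm, euclNorm_eq_norm, WithLp.toLp_zero,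
    norm_zero] at hle
  have hzero : WithLp.toLp 2 (x - y) = 0 :=
    norm_le_zero_iff.mp (nonpos_of_mul_nonpos_right hle ha)
  exact sub_eq_zero.mp (congrArg WithLp.ofLp hzero)

theorem l2OpNorm_nonsing_inv_le (ha : 0 < a) (h : ∀ v, a * euclNorm v ≤ euclNorm (M *ᵥ v)) :
    l2OpNorm M⁻¹ ≤ a⁻¹ := by
  have hdet := (isUnit_iff_isUnit_det M).mp (isUnit_of_mul_euclNorm_le ha h)
  refine l2OpNorm_le (inv_nonneg.mpr ha.le) fun w => ?_
  have hw := h (M⁻¹ *ᵥ w)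
  rw [mulVec_mulVec, mul_nonsing_inv M hdet, one_mulVec] at hw
  rw [inv_mul_eq_div, le_div_iff₀ ha]
  linarith

end LowerBound

theorem add_mul_euclNorm_le_euclNorm_add_smul_one_mulVec {ι : Type*} [Fintype ι] [DecidableEq ι]
    {A : Matrix ι ι ℝ} {α : ℝ} (hA : A.IsSymm) (hlb : ∀ v, α * euclNorm v ≤ euclNorm (A *ᵥ v))
    (hpos : ∀ v, 0 ≤ v ⬝ᵥ A *ᵥ v) (ε : ℝ) (v : ι → ℝ) :
    (α + ε) * euclNorm v ≤ euclNorm ((A + ε • 1) *ᵥ v) := by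
  have hT : (toEuclideanLin A).IsSymmetric :=
    isSymmetric_toEuclideanLin_iff.mpr (isHermitian_iff_isSymm.mpr hA)
  have hlbT : ∀ x, α * ‖x‖ ≤ ‖toEuclideanLin A x‖ := fun x => by
    simpa [euclNorm_eq_norm, toLpLin_apply] using hlb x.ofLp
  have hposT : ∀ x, 0 ≤ ⟪x, toEuclideanLin A x⟫ := fun x => by
    simpa [dotProduct_eq_inner, toLpLin_apply] using hpos x.ofLp
  have hquad : α * euclNorm v ^ 2 ≤ v ⬝ᵥ A *ᵥ v := by
    simpa [euclNorm_eq_norm, dotProduct_eq_inner] using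
      hT.mul_norm_sq_le_inner_apply_self hlbT hposT (WithLp.toLp 2 v)
  rw [euclNorm_eq_norm, euclNorm_eq_norm]
  refine mul_norm_le_norm_of_mul_norm_sq_le_inner ?_
  rw [← dotProduct_eq_inner, ← euclNorm_eq_norm, add_mulVec, smul_mulVec, one_mulVec,
    dotProduct_add, dotProduct_smul, smul_eq_mul, dotProduct_self_eq_euclNorm_sq]
  linarith

section Frobenius

variable {ι κ σ : Type*} [Fintype ι] [Fintype κ] [Fintype σ]

theorem frobNorm_nonneg (M : Matrix ι κ ℝ) : 0 ≤ frobNorm M := Real.sqrt_nonneg _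

theorem frobNorm_eq_euclNorm_uncurry (M : Matrix ι κ ℝ) :
    frobNorm M = euclNorm (Function.uncurry M) := by
  rw [frobNorm, euclNorm, Fintype.sum_prod_type]
  rfl

theorem frobNorm_sub_le (M N : Matrix ι κ ℝ) : frobNorm (M - N) ≤ frobNorm M + frobNorm N := by
  simp only [frobNorm_eq_euclNorm_uncurry, euclNorm_eq_norm]
  exact norm_sub_le (WithLp.toLp 2 (Function.uncurry M)) (WithLp.toLp 2 (Function.uncurry N))

theorem frobNorm_sq_eq_sum_euclNorm_col_sq (M : Matrix ι κ ℝ) :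
    frobNorm M ^ 2 = ∑ j, euclNorm (fun i => M i j) ^ 2 := by
  rw [frobNorm, Real.sq_sqrt (by positivity), Finset.sum_comm]
  refine Finset.sum_congr rfl fun j _ => ?_
  rw [euclNorm, Real.sq_sqrt (by positivity)]

theorem frobNorm_mul_le [DecidableEq κ] (M : Matrix ι κ ℝ) (N : Matrix κ σ ℝ) :
    frobNorm (M * N) ≤ l2OpNorm M * frobNorm N := by
  have hcol : ∀ j, euclNorm (fun i => (M * N) i j) ≤ l2OpNorm M * euclNorm (fun k => N k j) :=
    fun j => euclNorm_mulVec_le M (fun k => N k j)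
  refine (pow_le_pow_iff_left₀ (frobNorm_nonneg _)
    (mul_nonneg (l2OpNorm_nonneg M) (frobNorm_nonneg N)) two_ne_zero).mp ?_
  rw [mul_pow, frobNorm_sq_eq_sum_euclNorm_col_sq, frobNorm_sq_eq_sum_euclNorm_col_sq,
    Finset.mul_sum]
  refine Finset.sum_le_sum fun j _ => ?_
  rw [← mul_pow]
  exact pow_le_pow_left₀ (Real.sqrt_nonneg _) (hcol j) 2

theorem frobNorm_mul_le_of_le [DecidableEq κ] {M : Matrix ι κ ℝ} {N : Matrix κ σ ℝ} {x y : ℝ}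
    (hM : l2OpNorm M ≤ x) (hN : frobNorm N ≤ y) : frobNorm (M * N) ≤ x * y :=
  (frobNorm_mul_le M N).trans
    (mul_le_mul hM hN (frobNorm_nonneg N) ((l2OpNorm_nonneg M).trans hM))

end Frobenius

theorem nonsing_inv_mul_sub_nonsing_inv_mul {R ι κ : Type*} [CommRing R] [Fintype ι]
    [DecidableEq ι] {A Â : Matrix ι ι R} (hA : IsUnit A) (hÂ : IsUnit Â) (B B' : Matrix ι κ R) :
    Â⁻¹ * B' - A⁻¹ * B = Â⁻¹ * ((B' - B) - (Â - A) * (A⁻¹ * B)) := by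
  rw [Matrix.mul_sub, Matrix.mul_sub, Matrix.sub_mul, Matrix.mul_sub, ← Matrix.mul_assoc Â⁻¹ Â,
    nonsing_inv_mul Â ((isUnit_iff_isUnit_det Â).mp hÂ), ← Matrix.mul_assoc A,
    mul_nonsing_inv A ((isUnit_iff_isUnit_det A).mp hA), Matrix.one_mul, Matrix.one_mul]
  abel

theorem frobNorm_nonsing_inv_mul_sub_le {ι κ : Type*} [Fintype ι] [DecidableEq ι] [Fintype κ]
    {A Â : Matrix ι ι ℝ} (hA : IsUnit A) (hÂ : IsUnit Â) {B B' : Matrix ι κ ℝ} {a b c d r : ℝ}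
    (ha : l2OpNorm Â⁻¹ ≤ a) (hb : frobNorm (B' - B) ≤ b) (hc : l2OpNorm (Â - A) ≤ c)
    (hd : l2OpNorm A⁻¹ ≤ d) (hr : frobNorm B ≤ r) :
    frobNorm (Â⁻¹ * B' - A⁻¹ * B) ≤ a * (b + c * (d * r)) := by
  rw [nonsing_inv_mul_sub_nonsing_inv_mul hA hÂ]
  exact frobNorm_mul_le_of_le ha <| (frobNorm_sub_le _ _).trans <| add_le_add hb <|
    frobNorm_mul_le_of_le hc <| frobNorm_mul_le_of_le hd hr

theorem regularized_first_order_error_bound_general {m n : ℕ}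
    (A A' : Matrix (Fin m) (Fin m) ℝ) (B B' : Matrix (Fin m) (Fin n) ℝ)
    (δ γ β R α₁ α₂ ε : ℝ)
    (hsymm : A'.IsSymm) (hε : 0 ≤ ε)
    (hα₁ : 0 < α₁) (hα₂ : 0 < α₂)
    (hAop : l2OpNorm (A' - A) ≤ γ * δ)
    (hBF : frobNorm (B' - B) ≤ β * δ)
    (hB : frobNorm B ≤ R)
    (hA'lb : ∀ v : Fin m → ℝ, α₁ * euclNorm v ≤ euclNorm (A'.mulVec v))
    (hpsd : ∀ v : Fin m → ℝ, 0 ≤ v ⬝ᵥ A'.mulVec v)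
    (hAlb : ∀ v : Fin m → ℝ, α₂ * euclNorm v ≤ euclNorm (A.mulVec v)) :
    IsUnit (A' + ε • (1 : Matrix (Fin m) (Fin m) ℝ)) ∧ IsUnit A ∧
      frobNorm ((A' + ε • (1 : Matrix (Fin m) (Fin m) ℝ))⁻¹ * B' - A⁻¹ * B)
        ≤ β * δ / (α₁ + ε) + R * (γ * δ + ε) / ((α₁ + ε) * α₂) := by
  set Â := A' + ε • (1 : Matrix (Fin m) (Fin m) ℝ)
  have hα₁ε : 0 < α₁ + ε := by linarith
  have hÂlb : ∀ v, (α₁ + ε) * euclNorm v ≤ euclNorm (Â *ᵥ v) :=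
    add_mul_euclNorm_le_euclNorm_add_smul_one_mulVec hsymm hA'lb hpsd ε
  have hÂ := isUnit_of_mul_euclNorm_le hα₁ε hÂlb
  have hA := isUnit_of_mul_euclNorm_le hα₂ hAlb
  refine ⟨hÂ, hA, ?_⟩
  have hdiff : l2OpNorm (Â - A) ≤ γ * δ + ε := by
    rw [show Â - A = (A' - A) + ε • 1 from add_sub_right_comm _ _ _]
    exact (l2OpNorm_add_le _ _).trans (add_le_add hAop (l2OpNorm_smul_one_le hε))
  calc _ ≤ (α₁ + ε)⁻¹ * (β * δ + (γ * δ + ε) * (α₂⁻¹ * R)) :=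
        frobNorm_nonsing_inv_mul_sub_le hA hÂ (l2OpNorm_nonsing_inv_le hα₁ε hÂlb) hBF hdiff
          (l2OpNorm_nonsing_inv_le hα₂ hAlb) hB
    _ = β * δ / (α₁ + ε) + R * (γ * δ + ε) / ((α₁ + ε) * α₂) := by field_simp

/-- **Regularized First-Order Error Bound (Theorem 5 of the paper).**
Here `Â = A' + ε I` is the regularized inexact linear system. -/
theorem regularized_first_order_error_bound {m n : ℕ}
    (A A' : Matrix (Fin m) (Fin m) ℝ) (B B' : Matrix (Fin m) (Fin n) ℝ)
    (δ γ β R α₁ α₂ ε : ℝ)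
    (hsymm : A'.IsSymm) (hε : 0 ≤ ε)
    (hδ : 0 ≤ δ) (hγ : 0 ≤ γ) (hβ : 0 ≤ β) (hR : 0 ≤ R)
    (hα₁ : 0 < α₁) (hα₂ : 0 < α₂)
    (hAop : l2OpNorm (A' - A) ≤ γ * δ)
    (hBF : frobNorm (B' - B) ≤ β * δ)
    (hB : frobNorm B ≤ R)
    (hA'lb : ∀ v : Fin m → ℝ, α₁ * euclNorm v ≤ euclNorm (A'.mulVec v))
    (hpsd : ∀ v : Fin m → ℝ, 0 ≤ v ⬝ᵥ A'.mulVec v)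
    (hAlb : ∀ v : Fin m → ℝ, α₂ * euclNorm v ≤ euclNorm (A.mulVec v)) :
    IsUnit (A' + ε • (1 : Matrix (Fin m) (Fin m) ℝ)) ∧ IsUnit A ∧
      frobNorm ((A' + ε • (1 : Matrix (Fin m) (Fin m) ℝ))⁻¹ * B' - A⁻¹ * B)
        ≤ β * δ / (α₁ + ε) + R * (γ * δ + ε) / ((α₁ + ε) * α₂) :=
  regularized_first_order_error_bound_general A A' B B' δ γ β R α₁ α₂ ε hsymm hε hα₁ hα₂ hAop hBF hB
    hA'lb hpsd hAlb
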